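/- arXiv:1909.08974 — 7 statements merged into one kernel-verified Lean document; each statement's English description precedes it below -/
import Mathlib

section
/- Let W be an N×N real matrix with nonnegative entries and zero diagonal, let D = diag(d_1,...,d_N) with d_i = Σ_j w_{ij}, and let L = D − W. Suppose the associated digraph (which has an edge from node j to node i exactly when w_{ij} > 0) contains a spanning tree, i.e., there exists a root node r such that every other node can be reached from r along directed edges. Then: (i) 0 is an eigenvalue of L with the all-ones vector 1_N as an associated eigenvector; (ii) 0 is a simple root of the characteristic polynomial of L; and (iii) every other complex eigenvalue of L has strictly positive real part. -/
/-!
Write `L = D - W`, so that `(L u) i = ∑ j, W i j * (u i - u j)`. At a maximum of a real `u` every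
term is nonnegative, so if `L u = 0` the maximum propagates to all in-neighbours, hence back along
the tree to the root; applied to `u` and `-u` this shows that `ker L` consists of the constant
vectors. The same maximum/minimum argument shows that `L u` can only be a constant vector if that
constant is `0`, i.e. `ker L² = ker L`, so the generalized `0`-eigenspace is one-dimensional and
`0` is a simple root of the characteristic polynomial. Finally every Gershgorin disc of `L` is
centred at a point `d ≥ 0` with radius `d`, so it meets the imaginary axis only at `0`.
-/

open Matrix Polynomial

variable {ι : Type*} [Fintype ι] [DecidableEq ι]

def weightedLaplacian {R : Type*} [Ring R] (W : Matrix ι ι R) : Matrix ι ι R :=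
  diagonal (fun i => ∑ j, W i j) - W

section Ring

variable {R : Type*} [Ring R] (W : Matrix ι ι R)

lemma weightedLaplacian_mulVec_apply (u : ι → R) (i : ι) :
    (weightedLaplacian W *ᵥ u) i = ∑ j, W i j * (u i - u j) := by
  rw [weightedLaplacian, sub_mulVec, Pi.sub_apply, mulVec_diagonal, Finset.sum_mul, mulVec,
    dotProduct, ← Finset.sum_sub_distrib]
  simp only [mul_sub]

lemma weightedLaplacian_mulVec_one : weightedLaplacian W *ᵥ 1 = 0 := by
  ext i
  simp [weightedLaplacian_mulVec_apply]

lemma weightedLaplacian_apply_self (k : ι) :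
    weightedLaplacian W k k = ∑ j ∈ Finset.univ.erase k, W k j := by
  simp [weightedLaplacian, Finset.sum_erase_eq_sub]

lemma weightedLaplacian_apply_of_ne {k j : ι} (h : k ≠ j) :
    weightedLaplacian W k j = -W k j := by
  simp [weightedLaplacian, h]

end Ring

section Real

variable {W : Matrix ι ι ℝ}

lemma weightedLaplacian_mulVec_apply_nonneg_of_isMax (hW : ∀ i j, 0 ≤ W i j) {u : ι → ℝ}
    {a : ι} (hmax : ∀ j, u j ≤ u a) : 0 ≤ (weightedLaplacian W *ᵥ u) a := by
  rw [weightedLaplacian_mulVec_apply]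
  exact Finset.sum_nonneg fun j _ => mul_nonneg (hW a j) (sub_nonneg.2 (hmax j))

lemma apply_eq_of_isMax_of_weightedLaplacian_mulVec_eq_zero (hW : ∀ i j, 0 ≤ W i j)
    {u : ι → ℝ} {a j : ι} (hmax : ∀ k, u k ≤ u a) (ha : (weightedLaplacian W *ᵥ u) a = 0)
    (hj : 0 < W a j) : u j = u a := by
  rw [weightedLaplacian_mulVec_apply] at ha
  have hterm := (Finset.sum_eq_zero_iff_of_nonneg fun k _ =>
    mul_nonneg (hW a k) (sub_nonneg.2 (hmax k))).1 ha j (Finset.mem_univ j)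
  linarith [(mul_eq_zero.1 hterm).resolve_left hj.ne']

lemma le_apply_root_of_weightedLaplacian_mulVec_eq_zero (hW : ∀ i j, 0 ≤ W i j) {u : ι → ℝ}
    (hu : weightedLaplacian W *ᵥ u = 0) {r : ι}
    (hr : ∀ i, Relation.ReflTransGen (fun a b => 0 < W b a) r i) (i : ι) : u i ≤ u r := by
  have : Nonempty ι := ⟨r⟩
  obtain ⟨m, hm⟩ := Finite.exists_max u
  suffices ∀ b, Relation.ReflTransGen (fun a b => 0 < W b a) r b → u b = u m → u r = u m from
    this m (hr m) rfl ▸ hm i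
  intro b hb
  induction hb with
  | refl => exact id
  | tail _ hbc ih =>
    intro hc
    refine ih ((apply_eq_of_isMax_of_weightedLaplacian_mulVec_eq_zero hW ?_ ?_ hbc).trans hc)
    · exact fun k => hc ▸ hm k
    · exact congrFun hu _

lemma apply_eq_apply_root_of_weightedLaplacian_mulVec_eq_zero (hW : ∀ i j, 0 ≤ W i j)
    {u : ι → ℝ} (hu : weightedLaplacian W *ᵥ u = 0) {r : ι}
    (hr : ∀ i, Relation.ReflTransGen (fun a b => 0 < W b a) r i) (i : ι) : u i = u r := by
  have hneg : weightedLaplacian W *ᵥ (-u) = 0 := by rw [mulVec_neg, hu, neg_zero]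
  have := le_apply_root_of_weightedLaplacian_mulVec_eq_zero hW hneg hr i
  simp only [Pi.neg_apply, neg_le_neg_iff] at this
  exact (le_apply_root_of_weightedLaplacian_mulVec_eq_zero hW hu hr i).antisymm this

lemma ker_toLin'_weightedLaplacian (hW : ∀ i j, 0 ≤ W i j) {r : ι}
    (hr : ∀ i, Relation.ReflTransGen (fun a b => 0 < W b a) r i) :
    LinearMap.ker (toLin' (weightedLaplacian W)) = Submodule.span ℝ {1} := by
  ext u
  rw [LinearMap.mem_ker, toLin'_apply, Submodule.mem_span_singleton]
  constructor
  · intro hu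
    exact ⟨u r, funext fun i =>
      by simp [apply_eq_apply_root_of_weightedLaplacian_mulVec_eq_zero hW hu hr i]⟩
  · rintro ⟨c, rfl⟩
    rw [mulVec_smul, weightedLaplacian_mulVec_one, smul_zero]

lemma eq_zero_of_weightedLaplacian_mulVec_eq_smul_one (hW : ∀ i j, 0 ≤ W i j) [Nonempty ι]
    {u : ι → ℝ} {c : ℝ} (hu : weightedLaplacian W *ᵥ u = c • 1) : c = 0 := by
  obtain ⟨a, ha⟩ := Finite.exists_max u
  obtain ⟨b, hb⟩ := Finite.exists_min u
  have hmax := weightedLaplacian_mulVec_apply_nonneg_of_isMax hW ha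
  have hmin := weightedLaplacian_mulVec_apply_nonneg_of_isMax hW (u := -u) (a := b)
    (fun j => neg_le_neg (hb j))
  rw [mulVec_neg, hu] at hmin
  rw [hu] at hmax
  simp only [Pi.neg_apply, Pi.smul_apply, Pi.one_apply, smul_eq_mul, mul_one,
    neg_nonneg] at hmax hmin
  exact le_antisymm hmin hmax

lemma ker_toLin'_weightedLaplacian_sq_le (hW : ∀ i j, 0 ≤ W i j) {r : ι}
    (hr : ∀ i, Relation.ReflTransGen (fun a b => 0 < W b a) r i) :
    LinearMap.ker (toLin' (weightedLaplacian W) ^ 2) ≤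
      LinearMap.ker (toLin' (weightedLaplacian W)) := by
  have : Nonempty ι := ⟨r⟩
  intro u hu
  rw [LinearMap.mem_ker, pow_two, Module.End.mul_apply, ← LinearMap.mem_ker,
    ker_toLin'_weightedLaplacian hW hr, Submodule.mem_span_singleton] at hu
  obtain ⟨c, hc⟩ := hu
  rw [toLin'_apply] at hc
  rw [LinearMap.mem_ker, toLin'_apply, ← hc,
    eq_zero_of_weightedLaplacian_mulVec_eq_smul_one hW hc.symm, zero_smul]

end Real

lemma Module.End.maxGenEigenspace_zero_eq_ker {K V : Type*} [Field K] [AddCommGroup V]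
    [Module K V] {φ : Module.End K V} (h : LinearMap.ker (φ ^ 2) ≤ LinearMap.ker φ) :
    φ.maxGenEigenspace 0 = LinearMap.ker φ := by
  have hstable := Module.End.ker_pow_constant (f := φ) (k := 1)
    (by rw [pow_one]; exact le_antisymm (LinearMap.ker_le_ker_comp φ φ) h)
  ext x
  simp only [Module.End.mem_maxGenEigenspace, zero_smul, sub_zero]
  constructor
  · rintro ⟨k, hk⟩
    cases k with
    | zero => simp_all
    | succ k => rwa [← LinearMap.mem_ker, add_comm, ← hstable, pow_one] at hk
  · exact fun hx => ⟨1, by simpa using hx⟩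

lemma Module.End.natTrailingDegree_charpoly_eq_finrank_ker {K V : Type*} [Field K]
    [AddCommGroup V] [Module K V] [FiniteDimensional K V] {φ : Module.End K V}
    (h : LinearMap.ker (φ ^ 2) ≤ LinearMap.ker φ) :
    φ.charpoly.natTrailingDegree = Module.finrank K (LinearMap.ker φ) := by
  rw [← LinearMap.finrank_maxGenEigenspace_zero_eq, Module.End.maxGenEigenspace_zero_eq_ker h]

lemma Complex.re_pos_of_norm_sub_ofReal_le {μ : ℂ} {d : ℝ} (h : ‖μ - d‖ ≤ d) (hμ : μ ≠ 0) :
    0 < μ.re := by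
  have hd : 0 ≤ d := (norm_nonneg _).trans h
  have hsq : (μ.re - d) ^ 2 + μ.im ^ 2 ≤ d ^ 2 := by
    have := pow_le_pow_left₀ (norm_nonneg _) h 2
    rwa [← Complex.normSq_eq_norm_sq, Complex.normSq_apply, Complex.sub_re, Complex.sub_im,
      Complex.ofReal_re, Complex.ofReal_im, sub_zero, ← sq, ← sq] at this
  have hpos : 0 < μ.re ^ 2 + μ.im ^ 2 := by
    have := Complex.normSq_pos.2 hμ
    rwa [Complex.normSq_apply, ← sq, ← sq] at this
  nlinarith

lemma re_pos_of_isRoot_charpoly_weightedLaplacian {W : Matrix ι ι ℝ} (hW : ∀ i j, 0 ≤ W i j)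
    {μ : ℂ} (hμ : ((weightedLaplacian W).map (Complex.ofReal ·)).charpoly.IsRoot μ)
    (hμ0 : μ ≠ 0) : 0 < μ.re := by
  rw [← charpoly_toLin', ← Module.End.hasEigenvalue_iff_isRoot_charpoly] at hμ
  obtain ⟨k, hk⟩ := eigenvalue_mem_ball hμ
  have hradius : ∑ j ∈ Finset.univ.erase k, ‖(weightedLaplacian W).map (Complex.ofReal ·) k j‖ =
      weightedLaplacian W k k := by
    rw [weightedLaplacian_apply_self]
    refine Finset.sum_congr rfl fun j hj => ?_
    rw [map_apply, weightedLaplacian_apply_of_ne W (Finset.ne_of_mem_erase hj).symm,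
      Complex.norm_real, norm_neg, Real.norm_of_nonneg (hW k j)]
  rw [Metric.mem_closedBall, dist_eq_norm, hradius, map_apply] at hk
  exact Complex.re_pos_of_norm_sub_ofReal_le hk hμ0

theorem laplacian_spanning_tree_spectrum_general
    (N : ℕ)
    (W : Matrix (Fin N) (Fin N) ℝ)
    (hW_nonneg : ∀ i j, 0 ≤ W i j)
    (L : Matrix (Fin N) (Fin N) ℝ)
    (hL : L = Matrix.diagonal (fun i => ∑ j, W i j) - W)
    (htree : ∃ r : Fin N, ∀ i : Fin N,
      Relation.ReflTransGen (fun a b => 0 < W b a) r i) :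
    L.mulVec (fun _ => (1 : ℝ)) = 0 ∧
    ((L.map (Complex.ofReal ·)).charpoly).rootMultiplicity 0 = 1 ∧
    (∀ μ : ℂ, ((L.map (Complex.ofReal ·)).charpoly).IsRoot μ → μ ≠ 0 → 0 < μ.re) := by
  obtain ⟨r, hr⟩ := htree
  have : Nonempty (Fin N) := ⟨r⟩
  change L = weightedLaplacian W at hL
  subst hL
  refine ⟨weightedLaplacian_mulVec_one W, ?_,
    fun μ => re_pos_of_isRoot_charpoly_weightedLaplacian hW_nonneg⟩
  change ((weightedLaplacian W).map Complex.ofRealHom).charpoly.rootMultiplicity 0 = 1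
  rw [charpoly_map, ← map_zero Complex.ofRealHom,
    ← eq_rootMultiplicity_map Complex.ofReal_injective, rootMultiplicity_eq_natTrailingDegree',
    ← charpoly_toLin', Module.End.natTrailingDegree_charpoly_eq_finrank_ker
      (ker_toLin'_weightedLaplacian_sq_le hW_nonneg hr),
    ker_toLin'_weightedLaplacian hW_nonneg hr, finrank_span_singleton one_ne_zero]

/-- Let `W` be an `N×N` real matrix with nonnegative entries and zero
diagonal, `D` the diagonal matrix of row sums, and `L = D - W` the Laplacian.  If the
associated digraph (with an edge from node `j` to node `i` exactly when `W i j > 0`)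
has a spanning tree (some root `r` reaches every node along directed edges), then:
(i) `0` is an eigenvalue of `L` with the all-ones vector as eigenvector;
(ii) `0` is a simple root of the characteristic polynomial of `L` (over `ℂ`);
(iii) every other complex eigenvalue of `L` has strictly positive real part. -/
theorem laplacian_spanning_tree_spectrum
    (N : ℕ) (hN : 1 ≤ N)
    (W : Matrix (Fin N) (Fin N) ℝ)
    (hW_nonneg : ∀ i j, 0 ≤ W i j)
    (hW_diag : ∀ i, W i i = 0)
    (L : Matrix (Fin N) (Fin N) ℝ)
    (hL : L = Matrix.diagonal (fun i => ∑ j, W i j) - W)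
    (htree : ∃ r : Fin N, ∀ i : Fin N,
      Relation.ReflTransGen (fun a b => 0 < W b a) r i) :
    L.mulVec (fun _ => (1 : ℝ)) = 0 ∧
    ((L.map (Complex.ofReal ·)).charpoly).rootMultiplicity 0 = 1 ∧
    (∀ μ : ℂ, ((L.map (Complex.ofReal ·)).charpoly).IsRoot μ → μ ≠ 0 → 0 < μ.re) :=
  laplacian_spanning_tree_spectrum_general N W hW_nonneg L hL htree
end

section
/- Suppose κ : ℝ → ℝ^{2n} is differentiable with κ'(t) = A0 κ(t) + θ2 w(t) + θ1 (F_v(t) − F_p'(t)) for all t, where w : ℝ → ℝ^n is continuous and F_p, F_v : ℝ → ℝ^n are continuously differentiable. Then for every t ≥ 0, κ(t) = exp(t A0) (κ(0) + θ1 F_p(0) + θ2 F_v(0)) + ∫₀ᵗ exp((t−s) A0) θ2 w(s) ds + ∫₀ᵗ exp((t−s) A0) θ2 (F_v'(s) − α_p F_p(s) − α_v F_v(s)) ds − θ1 F_p(t) − θ2 F_v(t). -/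
/-!
Substituting `y = κ + θ1 F_p + θ2 F_v` removes `F_p'` from the forcing: since
`A0 θ1 = α_p θ2` and `A0 θ2 = θ1 + α_v θ2`, one gets
`y' = A0 y + θ2 (w + F_v' - α_p F_p - α_v F_v)`, a linear system with continuous forcing.
The claim is the variation-of-constants formula for `y`, which follows from the fundamental
theorem of calculus applied to `s ↦ exp (-s A0) y s`.
-/

open Matrix intervalIntegral

noncomputable section

/-- `θ1 = [I_n; 0]` as a `2n × n` real matrix (rows indexed by `Fin n ⊕ Fin n`). -/
def theta1 (n : ℕ) : Matrix (Fin n ⊕ Fin n) (Fin n) ℝ :=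
  Matrix.of (Sum.elim (fun i j => (1 : Matrix (Fin n) (Fin n) ℝ) i j) (fun _ _ => 0))

/-- `θ2 = [0; I_n]` as a `2n × n` real matrix. -/
def theta2 (n : ℕ) : Matrix (Fin n ⊕ Fin n) (Fin n) ℝ :=
  Matrix.of (Sum.elim (fun _ _ => 0) (fun i j => (1 : Matrix (Fin n) (Fin n) ℝ) i j))

/-- `α = [α_p I_n, α_v I_n]` as an `n × 2n` real matrix. -/
def alphaMat (n : ℕ) (αp αv : ℝ) : Matrix (Fin n) (Fin n ⊕ Fin n) ℝ :=
  Matrix.of fun i => Sum.elim (fun j => αp * (1 : Matrix (Fin n) (Fin n) ℝ) i j)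
    (fun j => αv * (1 : Matrix (Fin n) (Fin n) ℝ) i j)

/-- `A0 = θ1 θ2ᵀ + θ2 [α_p I_n, α_v I_n]`, i.e. the block matrix
`[[0, I_n], [α_p I_n, α_v I_n]]`. -/
def A0 (n : ℕ) (αp αv : ℝ) : Matrix (Fin n ⊕ Fin n) (Fin n ⊕ Fin n) ℝ :=
  theta1 n * (theta2 n)ᵀ + theta2 n * alphaMat n αp αv

namespace Matrix

variable {ι m n : Type*} [Fintype ι] [Fintype m] [Fintype n] [DecidableEq ι]

theorem mulVec_intervalIntegral (M : Matrix m n ℝ) {f : ℝ → n → ℝ} {a b : ℝ}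
    (hf : IntervalIntegrable f MeasureTheory.volume a b) :
    M *ᵥ (∫ s in a..b, f s) = ∫ s in a..b, M *ᵥ f s :=
  (M.mulVecLin.toContinuousLinearMap.intervalIntegral_comp_comm hf).symm

theorem _root_.HasDerivAt.const_matrix_mulVec (M : Matrix m n ℝ) {v : ℝ → n → ℝ} {v' : n → ℝ}
    {t : ℝ} (hv : HasDerivAt v v' t) : HasDerivAt (fun s => M *ᵥ v s) (M *ᵥ v') t :=
  M.mulVecLin.toContinuousLinearMap.hasFDerivAt.comp_hasDerivAt t hv

section

/- Matrices carry no norm instance; any norm serves for calculus here, since the topology and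
`NormedSpace.exp` do not depend on it. -/
attribute [local instance] Matrix.linftyOpNormedAddCommGroup Matrix.linftyOpNormedSpace

theorem _root_.HasDerivAt.matrix_mulVec {M : ℝ → Matrix m n ℝ} {v : ℝ → n → ℝ}
    {M' : Matrix m n ℝ} {v' : n → ℝ} {t : ℝ} (hM : HasDerivAt M M' t) (hv : HasDerivAt v v' t) :
    HasDerivAt (fun s => M s *ᵥ v s) (M t *ᵥ v' + M' *ᵥ v t) t :=
  (mulVecBilin ℝ ℝ : Matrix m n ℝ →ₗ[ℝ] _).toContinuousBilinearMap.hasDerivAt_of_bilinear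
    (fun _ => hM) (fun _ => hv)

end

open NormedSpace (exp)

theorem exp_add_smul (A : Matrix ι ι ℝ) (a b : ℝ) :
    exp ((a + b) • A) = exp (a • A) * exp (b • A) := by
  rw [add_smul, exp_add_of_commute _ _ (((Commute.refl A).smul_left a).smul_right b)]

attribute [local instance] Matrix.linftyOpNormedRing Matrix.linftyOpNormedAlgebra

@[fun_prop]
theorem continuous_exp : Continuous (exp : Matrix ι ι ℝ → Matrix ι ι ℝ) :=
  NormedSpace.exp_continuous

theorem hasDerivAt_exp_neg_smul_mulVec (A : Matrix ι ι ℝ) {y : ℝ → ι → ℝ} {y' : ι → ℝ} {t : ℝ}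
    (hy : HasDerivAt y y' t) :
    HasDerivAt (fun s => exp ((-s) • A) *ᵥ y s) (exp ((-t) • A) *ᵥ (y' - A *ᵥ y t)) t := by
  have hexp : HasDerivAt (fun s : ℝ => exp ((-s) • A)) (-(A * exp ((-t) • A))) t := by
    have := (hasDerivAt_exp_smul_const' A (-t)).scomp t (hasDerivAt_neg t)
    simp only [Function.comp_def, neg_smul, one_smul] at this ⊢
    exact this
  convert hexp.matrix_mulVec hy using 1
  rw [mulVec_sub, neg_mulVec, mulVec_mulVec,
    (((Commute.refl A).smul_left (-t)).exp_left).eq, sub_eq_add_neg]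

theorem eq_exp_smul_mulVec_add_integral (A : Matrix ι ι ℝ) {y g : ℝ → ι → ℝ}
    (hy : ∀ s, HasDerivAt y (A *ᵥ y s + g s) s) (hg : Continuous g) (t : ℝ) :
    y t = exp (t • A) *ᵥ y 0 + ∫ s in 0..t, exp ((t - s) • A) *ᵥ g s := by
  have hint : IntervalIntegrable (fun s => exp ((-s) • A) *ᵥ g s) MeasureTheory.volume 0 t :=
    (by fun_prop : Continuous fun s : ℝ => exp ((-s) • A) *ᵥ g s).intervalIntegrable 0 t
  have hftc : ∫ s in 0..t, exp ((-s) • A) *ᵥ g s = exp ((-t) • A) *ᵥ y t - y 0 := by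
    rw [intervalIntegral.integral_eq_sub_of_hasDerivAt (fun s _ => by
      simpa using hasDerivAt_exp_neg_smul_mulVec A (hy s)) hint]
    simp
  calc y t = exp (t • A) *ᵥ (exp ((-t) • A) *ᵥ y t) := by
        rw [mulVec_mulVec, ← exp_add_smul, add_neg_cancel, zero_smul, NormedSpace.exp_zero,
          one_mulVec]
    _ = exp (t • A) *ᵥ (y 0 + ∫ s in 0..t, exp ((-s) • A) *ᵥ g s) := by
        rw [hftc, add_sub_cancel]
    _ = _ := by
        rw [mulVec_add, mulVec_intervalIntegral _ hint]
        congr 1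
        refine intervalIntegral.integral_congr fun s _ => ?_
        rw [mulVec_mulVec, ← exp_add_smul, sub_eq_add_neg]

end Matrix

section FormationAgreement

variable (n : ℕ) (αp αv : ℝ)

theorem theta1_eq_fromRows : theta1 n = fromRows 1 0 := by
  ext (i | i) j <;> rfl

theorem theta2_eq_fromRows : theta2 n = fromRows 0 1 := by
  ext (i | i) j <;> rfl

theorem alphaMat_eq_fromCols : alphaMat n αp αv = fromCols (αp • 1) (αv • 1) := by
  ext i (j | j) <;> rfl

theorem A0_mul_theta1 : A0 n αp αv * theta1 n = αp • theta2 n := by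
  simp [A0, Matrix.add_mul, theta1_eq_fromRows, theta2_eq_fromRows,
    alphaMat_eq_fromCols, transpose_fromRows, fromCols_mul_fromRows]

theorem A0_mul_theta2 : A0 n αp αv * theta2 n = theta1 n + αv • theta2 n := by
  simp [A0, Matrix.add_mul, theta1_eq_fromRows, theta2_eq_fromRows,
    alphaMat_eq_fromCols, transpose_fromRows, fromCols_mul_fromRows]

variable {n αp αv}

theorem hasDerivAt_add_theta1_mulVec_add_theta2_mulVec {κ : ℝ → (Fin n ⊕ Fin n → ℝ)}
    {Fp Fv : ℝ → Fin n → ℝ} {u Fp' Fv' : Fin n → ℝ} {t : ℝ}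
    (hκ : HasDerivAt κ (A0 n αp αv *ᵥ κ t + theta2 n *ᵥ u + theta1 n *ᵥ (Fv t - Fp')) t)
    (hFp : HasDerivAt Fp Fp' t) (hFv : HasDerivAt Fv Fv' t) :
    HasDerivAt (fun s => κ s + theta1 n *ᵥ Fp s + theta2 n *ᵥ Fv s)
      (A0 n αp αv *ᵥ (κ t + theta1 n *ᵥ Fp t + theta2 n *ᵥ Fv t)
        + (theta2 n *ᵥ u + theta2 n *ᵥ (Fv' - αp • Fp t - αv • Fv t))) t := by
  refine ((hκ.add (hFp.const_matrix_mulVec (theta1 n))).add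
    (hFv.const_matrix_mulVec (theta2 n))).congr_deriv ?_
  simp only [mulVec_add, mulVec_sub, mulVec_smul, mulVec_mulVec, A0_mul_theta1, A0_mul_theta2,
    add_mulVec, smul_mulVec]
  abel

end FormationAgreement

theorem formation_center_decomposition_general
    (n : ℕ) (αp αv : ℝ)
    (κ : ℝ → ((Fin n ⊕ Fin n) → ℝ))
    (w : ℝ → (Fin n → ℝ)) (Fp Fv : ℝ → (Fin n → ℝ))
    (hw : Continuous w)
    (hFp : ContDiff ℝ 1 Fp) (hFv : ContDiff ℝ 1 Fv)
    (hκ : ∀ t : ℝ, HasDerivAt κ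
      ((A0 n αp αv).mulVec (κ t) + (theta2 n).mulVec (w t)
        + (theta1 n).mulVec (Fv t - deriv Fp t)) t) :
    ∀ t : ℝ, 0 ≤ t →
      κ t = (NormedSpace.exp (t • A0 n αp αv)).mulVec
              (κ 0 + (theta1 n).mulVec (Fp 0) + (theta2 n).mulVec (Fv 0))
        + (∫ s in (0:ℝ)..t, (NormedSpace.exp ((t - s) • A0 n αp αv)).mulVec
              ((theta2 n).mulVec (w s)))
        + (∫ s in (0:ℝ)..t, (NormedSpace.exp ((t - s) • A0 n αp αv)).mulVec
              ((theta2 n).mulVec (deriv Fv s - αp • Fp s - αv • Fv s)))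
        - (theta1 n).mulVec (Fp t) - (theta2 n).mulVec (Fv t) := by
  intro t _
  have hFp' s : HasDerivAt Fp (deriv Fp s) s := (hFp.differentiable one_ne_zero s).hasDerivAt
  have hFv' s : HasDerivAt Fv (deriv Fv s) s := (hFv.differentiable one_ne_zero s).hasDerivAt
  have hdFv : Continuous (deriv Fv) := hFv.continuous_deriv le_rfl
  have hFpc := hFp.continuous
  have hFvc := hFv.continuous
  have hvoc := Matrix.eq_exp_smul_mulVec_add_integral (A0 n αp αv)
    (fun s => hasDerivAt_add_theta1_mulVec_add_theta2_mulVec (hκ s) (hFp' s) (hFv' s))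
    (by fun_prop) t
  simp only [mulVec_add] at hvoc ⊢
  rw [intervalIntegral.integral_add ((by fun_prop : Continuous _).intervalIntegrable 0 t)
    ((by fun_prop : Continuous _).intervalIntegrable 0 t)] at hvoc
  linear_combination hvoc

/-- variation-of-constants formula for the formation-agreement
dynamics, Theorem 1 of the paper: if `κ' = A0 κ + θ2 w + θ1 (F_v - F_p')` with `w`
continuous and `F_p, F_v` continuously differentiable, then for `t ≥ 0`,
`κ t = exp (t A0) (κ 0 + θ1 F_p 0 + θ2 F_v 0)
      + ∫₀ᵗ exp ((t-s) A0) θ2 (w s) ds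
      + ∫₀ᵗ exp ((t-s) A0) θ2 (F_v' s - α_p F_p s - α_v F_v s) ds
      - θ1 F_p t - θ2 F_v t`. -/
theorem formation_center_decomposition
    (n : ℕ) (hn : 1 ≤ n) (αp αv : ℝ)
    (κ : ℝ → ((Fin n ⊕ Fin n) → ℝ))
    (w : ℝ → (Fin n → ℝ)) (Fp Fv : ℝ → (Fin n → ℝ))
    (hw : Continuous w)
    (hFp : ContDiff ℝ 1 Fp) (hFv : ContDiff ℝ 1 Fv)
    (hκ : ∀ t : ℝ, HasDerivAt κ
      ((A0 n αp αv).mulVec (κ t) + (theta2 n).mulVec (w t)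
        + (theta1 n).mulVec (Fv t - deriv Fp t)) t) :
    ∀ t : ℝ, 0 ≤ t →
      κ t = (NormedSpace.exp (t • A0 n αp αv)).mulVec
              (κ 0 + (theta1 n).mulVec (Fp 0) + (theta2 n).mulVec (Fv 0))
        + (∫ s in (0:ℝ)..t, (NormedSpace.exp ((t - s) • A0 n αp αv)).mulVec
              ((theta2 n).mulVec (w s)))
        + (∫ s in (0:ℝ)..t, (NormedSpace.exp ((t - s) • A0 n αp αv)).mulVec
              ((theta2 n).mulVec (deriv Fv s - αp • Fp s - αv • Fv s)))
        - (theta1 n).mulVec (Fp t) - (theta2 n).mulVec (Fv t) :=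
  formation_center_decomposition_general n αp αv κ w Fp Fv hw hFp hFv hκ

end
end

section
/- Let P be a 2n×2n real symmetric matrix satisfying the algebraic Riccati equation P A0 + A0ᵀ P − P θ2 θ2ᵀ P + I = 0, let r > 0 be a real number, and set K = r⁻¹ θ2ᵀ P. Then for every complex number λ, regarding all real matrices as complex matrices, the matrix M = A0 − λ θ2 K satisfies M^H P + P M = (1 − 2 Re(λ)/r) P θ2 θ2ᵀ P − I, where M^H denotes the conjugate transpose. -/
open Matrix intervalIntegral

noncomputable section

/-- `θ1 = [I_n; 0]` as a `2n × n` real matrix (rows indexed by `Fin n ⊕ Fin n`). -/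
lemma mapCT {m l : Type*} [Fintype m] [Fintype l] (X : Matrix m l ℝ) :
    (X.map (Complex.ofReal ·))ᴴ = Xᵀ.map (Complex.ofReal ·) := by
  ext i j
  simp [conjTranspose_apply, Matrix.map_apply, Complex.conj_ofReal]

lemma mapSmul {m l : Type*} (c : ℝ) (X : Matrix m l ℝ) :
    ((c • X).map (Complex.ofReal ·)) = (c : ℂ) • X.map (Complex.ofReal ·) := by
  ext i j
  simp [Matrix.map_apply, Complex.ofReal_mul]

lemma mapMul {m l k : Type*} [Fintype l] (X : Matrix m l ℝ) (Y : Matrix l k ℝ) :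
    ((X * Y).map (Complex.ofReal ·)) = X.map (Complex.ofReal ·) * Y.map (Complex.ofReal ·) := by
  ext i j
  simp [Matrix.map_apply, Matrix.mul_apply]

/-- Lyapunov-derivative identity, equations (23)–(24) of the paper:
if the real symmetric matrix `P` solves the algebraic Riccati equation
`P A0 + A0ᵀ P - P θ2 θ2ᵀ P + I = 0`, `r > 0` and `K = r⁻¹ θ2ᵀ P`, then for every
`λ ∈ ℂ` the matrix `M = A0 - λ θ2 K` (over `ℂ`) satisfies
`Mᴴ P + P M = (1 - 2 Re(λ)/r) P θ2 θ2ᵀ P - I`. -/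
theorem riccati_lyapunov_identity
    (n : ℕ) (hn : 1 ≤ n) (αp αv : ℝ)
    (P : Matrix (Fin n ⊕ Fin n) (Fin n ⊕ Fin n) ℝ) (hPsymm : P.IsSymm)
    (hRiccati : P * A0 n αp αv + (A0 n αp αv)ᵀ * P
        - P * theta2 n * (theta2 n)ᵀ * P + 1 = 0)
    (r : ℝ) (hr : 0 < r)
    (K : Matrix (Fin n) (Fin n ⊕ Fin n) ℝ) (hK : K = r⁻¹ • ((theta2 n)ᵀ * P))
    (lam : ℂ)
    (M : Matrix (Fin n ⊕ Fin n) (Fin n ⊕ Fin n) ℂ)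
    (hM : M = (A0 n αp αv).map (Complex.ofReal ·)
        - lam • ((theta2 n).map (Complex.ofReal ·) * K.map (Complex.ofReal ·))) :
    Mᴴ * P.map (Complex.ofReal ·) + P.map (Complex.ofReal ·) * M
      = (((1 - 2 * lam.re / r : ℝ) : ℂ)) •
          (P.map (Complex.ofReal ·) * (theta2 n).map (Complex.ofReal ·)
            * ((theta2 n)ᵀ).map (Complex.ofReal ·) * P.map (Complex.ofReal ·))
        - 1 := by
  have hPt : Pᵀ = P := hPsymm
  have key : P * A0 n αp αv + (A0 n αp αv)ᵀ * P = P * theta2 n * (theta2 n)ᵀ * P - 1 := by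
    rw [← sub_eq_zero]
    calc P * A0 n αp αv + (A0 n αp αv)ᵀ * P - (P * theta2 n * (theta2 n)ᵀ * P - 1)
        = P * A0 n αp αv + (A0 n αp αv)ᵀ * P - P * theta2 n * (theta2 n)ᵀ * P + 1 := by abel
      _ = 0 := hRiccati
  set Q := P.map (Complex.ofReal ·) with hQ
  set T := (theta2 n).map (Complex.ofReal ·) with hT
  set Tt := ((theta2 n)ᵀ).map (Complex.ofReal ·) with hTt
  set A := (A0 n αp αv).map (Complex.ofReal ·) with hA
  set At := ((A0 n αp αv)ᵀ).map (Complex.ofReal ·) with hAt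
  have keyC : Q * A + At * Q = Q * T * Tt * Q - 1 := by
    have h := congrArg (fun X : Matrix (Fin n ⊕ Fin n) (Fin n ⊕ Fin n) ℝ =>
      X.map (Complex.ofReal ·)) key
    simpa [mapMul, Matrix.map_add, Matrix.map_sub, Matrix.map_one, hQ, hT, hTt, hA, hAt] using h
  have hQH : Qᴴ = Q := by rw [hQ, mapCT, hPt]
  have hTH : Tᴴ = Tt := by rw [hT, mapCT, hTt]
  have hTtH : Ttᴴ = T := by rw [hTt, mapCT, transpose_transpose, hT]
  have hKmap : K.map (Complex.ofReal ·) = (r⁻¹ : ℂ) • (Tt * Q) := by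
    rw [hK, mapSmul, mapMul, Complex.ofReal_inv, hTt, hQ]
  set c := lam * (r : ℂ)⁻¹ with hc
  set cb := (starRingEnd ℂ) lam * (r : ℂ)⁻¹ with hcb
  have hM' : M = A - c • (T * (Tt * Q)) := by
    rw [hM, hKmap]
    simp [mul_smul_comm, smul_smul, hc]
  have hstar : star c = cb := by
    rw [hc, hcb]
    simp [Complex.conj_inv, Complex.conj_ofReal]
  have hMH : Mᴴ = At - cb • (Q * T * Tt) := by
    rw [hM', conjTranspose_sub, conjTranspose_smul, hA, mapCT, hAt, hstar]
    congr 1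
    rw [conjTranspose_mul, conjTranspose_mul, hQH, hTH, hTtH, Matrix.mul_assoc]
  have hcoef : ((1 - 2 * lam.re / r : ℝ) : ℂ) = 1 - (cb + c) := by
    rw [hcb, hc, ← add_mul, add_comm ((starRingEnd ℂ) lam), Complex.add_conj]
    push_cast
    ring
  have hsum : (At - cb • (Q * T * Tt)) * Q + Q * (A - c • (T * (Tt * Q)))
      = (Q * A + At * Q) - (cb + c) • (Q * (T * (Tt * Q))) := by
    simp only [sub_mul, mul_sub, smul_mul_assoc, mul_smul_comm, add_smul, Matrix.mul_assoc]
    abel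
  have keyC' : Q * A + At * Q = Q * (T * (Tt * Q)) - 1 := by
    rw [keyC]; simp [Matrix.mul_assoc]
  rw [hMH, hM', hsum, keyC', hcoef]
  simp only [Matrix.mul_assoc]
  module


end
end

section
/- Let P be a 2n×2n real symmetric positive definite matrix satisfying the algebraic Riccati equation P A0 + A0ᵀ P − P θ2 θ2ᵀ P + I = 0, let r > 0, and set K = r⁻¹ θ2ᵀ P. Then for every complex number λ with Re(λ) ≥ r, every complex eigenvalue of the matrix A0 − λ θ2 K (regarded as a 2n×2n complex matrix) has strictly negative real part. -/
/-!
Write `M = A0 - λ θ2 K` and let `v` be an eigenvector of `M` for `μ`. Eliminating `A0ᵀ P` with the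
Riccati equation gives the Lyapunov identity
`Mᴴ P + P M = -(I + (2 Re λ / r - 1) P θ2 θ2ᵀ P)`,
whose right-hand side is negative definite once `Re λ ≥ r / 2`. Evaluating both sides at `v` gives
`2 Re μ · v* P v < 0`, and `v* P v > 0` forces `Re μ < 0`. The argument runs over `ℂ`, where the
complexification of the real positive definite `P` is again positive definite.
-/

open Matrix intervalIntegral

noncomputable section

open scoped ComplexOrder

namespace Matrix

variable {ι κ : Type*} [Fintype ι]

theorem exists_mulVec_eq_smul_of_isRoot_charpoly {K : Type*} [Field K] [DecidableEq ι]
    {M : Matrix ι ι K} {μ : K} (h : M.charpoly.IsRoot μ) :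
    ∃ v : ι → K, v ≠ 0 ∧ M *ᵥ v = μ • v := by
  rw [← mem_spectrum_iff_isRoot_charpoly, ← spectrum_toLin',
    ← Module.End.hasEigenvalue_iff_mem_spectrum] at h
  obtain ⟨v, hv⟩ := h.exists_hasEigenvector
  exact ⟨v, hv.2, Module.End.mem_eigenspace_iff.1 hv.1⟩

theorem map_ofReal_transpose {m n : Type*} (X : Matrix m n ℝ) :
    Xᵀ.map ((↑) : ℝ → ℂ) = (X.map (↑))ᴴ :=
  conjTranspose_map _ fun _ => (Complex.conj_ofReal _).symm

theorem map_ofReal_mul {l m n : Type*} [Fintype m] (X : Matrix l m ℝ) (Y : Matrix m n ℝ) :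
    (X * Y).map ((↑) : ℝ → ℂ) = X.map (↑) * Y.map (↑) :=
  Matrix.map_mul (f := Complex.ofRealHom)

theorem re_star_dotProduct_map_ofReal_mulVec (P : Matrix ι ι ℝ) (v : ι → ℂ) :
    (star v ⬝ᵥ (P.map ((↑) : ℝ → ℂ) *ᵥ v)).re =
      (fun i => (v i).re) ⬝ᵥ (P *ᵥ fun i => (v i).re)
        + (fun i => (v i).im) ⬝ᵥ (P *ᵥ fun i => (v i).im) := by
  simp only [dotProduct, mulVec, Finset.mul_sum, Complex.re_sum, ← Finset.sum_add_distrib]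
  refine Finset.sum_congr rfl fun i _ => Finset.sum_congr rfl fun j _ => ?_
  simp [Complex.mul_re, Complex.mul_im]

theorem PosDef.map_ofReal {P : Matrix ι ι ℝ} (hP : P.PosDef) : (P.map ((↑) : ℝ → ℂ)).PosDef := by
  have hH : (P.map ((↑) : ℝ → ℂ)).IsHermitian := hP.isHermitian.map _ fun _ => by simp
  refine .of_dotProduct_mulVec_pos hH fun v hv =>
    Complex.pos_iff.2 ⟨?_, (hH.im_star_dotProduct_mulVec_self v).symm⟩
  rw [re_star_dotProduct_map_ofReal_mulVec]
  have hre := hP.posSemidef.dotProduct_mulVec_nonneg fun i => (v i).re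
  have him := hP.posSemidef.dotProduct_mulVec_nonneg fun i => (v i).im
  simp only [star_trivial] at hre him
  by_cases hx : (fun i => (v i).re) = 0
  · have hy : (fun i => (v i).im) ≠ 0 := fun hy =>
      hv <| funext fun i => Complex.ext (congrFun hx i) (congrFun hy i)
    simpa [hx] using hP.dotProduct_mulVec_pos hy
  · have := hP.dotProduct_mulVec_pos hx
    simp only [star_trivial] at this
    linarith

variable {𝕜 : Type*} [RCLike 𝕜]

theorem re_lt_zero_of_lyapunov {M P Q : Matrix ι ι 𝕜} (hP : P.PosDef) (hQ : Q.PosDef)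
    (hlyap : Mᴴ * P + P * M = -Q) {μ : 𝕜} {v : ι → 𝕜} (hv : v ≠ 0) (hMv : M *ᵥ v = μ • v) :
    RCLike.re μ < 0 := by
  have hquad : star v ⬝ᵥ ((Mᴴ * P + P * M) *ᵥ v)
      = ((2 * RCLike.re μ : ℝ) : 𝕜) * (star v ⬝ᵥ (P *ᵥ v)) := by
    rw [add_mulVec, dotProduct_add, ← mulVec_mulVec, ← mulVec_mulVec, hMv, dotProduct_mulVec,
      ← star_mulVec, hMv, mulVec_smul, star_smul, smul_dotProduct, dotProduct_smul, ← add_smul,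
      smul_eq_mul, RCLike.star_def, add_comm, RCLike.add_conj]
    push_cast
    ring
  rw [hlyap, neg_mulVec, dotProduct_neg] at hquad
  have hre := congrArg RCLike.re hquad
  rw [RCLike.re_ofReal_mul, map_neg] at hre
  nlinarith [hP.re_dotProduct_pos hv, hQ.re_dotProduct_pos hv]

variable [Fintype κ] [DecidableEq ι]

theorem riccati_closedLoop_lyapunov_eq {A P : Matrix ι ι 𝕜} {Θ : Matrix ι κ 𝕜}
    (hP : Pᴴ = P) (hRic : P * A + Aᴴ * P - P * Θ * Θᴴ * P + 1 = 0) (c : ℝ) (lam : 𝕜) :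
    (A - lam • (Θ * ((c : 𝕜) • (Θᴴ * P))))ᴴ * P + P * (A - lam • (Θ * ((c : 𝕜) • (Θᴴ * P))))
      = -(1 + ((2 * c * RCLike.re lam - 1 : ℝ) : 𝕜) • (P * Θ * (P * Θ)ᴴ)) := by
  have hA : Aᴴ * P = P * (Θ * (Θᴴ * P)) - 1 - P * A := by
    rw [← sub_eq_zero, ← hRic]; simp only [Matrix.mul_assoc]; abel
  simp only [conjTranspose_sub, conjTranspose_smul, conjTranspose_mul, conjTranspose_conjTranspose,
    hP, Matrix.sub_mul, Matrix.mul_sub, Matrix.smul_mul, Matrix.mul_smul, Matrix.mul_assoc, hA,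
    RCLike.star_def, RCLike.conj_ofReal]
  match_scalars
  · linear_combination -(c : 𝕜) * RCLike.add_conj lam
  all_goals norm_num

theorem re_lt_zero_of_isRoot_charpoly_riccati_closedLoop {A P : Matrix ι ι 𝕜}
    {Θ : Matrix ι κ 𝕜} (hP : P.PosDef) (hRic : P * A + Aᴴ * P - P * Θ * Θᴴ * P + 1 = 0)
    {c : ℝ} {lam : 𝕜} (hgain : 1 ≤ 2 * c * RCLike.re lam) {μ : 𝕜}
    (hμ : (A - lam • (Θ * ((c : 𝕜) • (Θᴴ * P)))).charpoly.IsRoot μ) :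
    RCLike.re μ < 0 := by
  obtain ⟨v, hv, hMv⟩ := exists_mulVec_eq_smul_of_isRoot_charpoly hμ
  have hQ : (1 + ((2 * c * RCLike.re lam - 1 : ℝ) : 𝕜) • (P * Θ * (P * Θ)ᴴ)).PosDef :=
    PosDef.one.add_posSemidef <| (posSemidef_self_mul_conjTranspose _).smul <|
      RCLike.ofReal_nonneg.2 (sub_nonneg.2 hgain)
  exact re_lt_zero_of_lyapunov hP hQ (riccati_closedLoop_lyapunov_eq hP.isHermitian.eq hRic c lam)
    hv hMv

end Matrix

theorem riccati_gain_is_Hurwitz_general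
    (n : ℕ) (αp αv : ℝ)
    (P : Matrix (Fin n ⊕ Fin n) (Fin n ⊕ Fin n) ℝ) (hPpos : P.PosDef)
    (hRiccati : P * A0 n αp αv + (A0 n αp αv)ᵀ * P
        - P * theta2 n * (theta2 n)ᵀ * P + 1 = 0)
    (r : ℝ) (hr : 0 < r)
    (K : Matrix (Fin n) (Fin n ⊕ Fin n) ℝ) (hK : K = r⁻¹ • ((theta2 n)ᵀ * P))
    (lam : ℂ) (hlam : r ≤ lam.re) :
    ∀ μ : ℂ,
      (((A0 n αp αv).map (Complex.ofReal ·)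
        - lam • ((theta2 n).map (Complex.ofReal ·) * K.map (Complex.ofReal ·))).charpoly).IsRoot μ
      → μ.re < 0 := by
  intro μ hμ
  have hRic : P.map (↑) * (A0 n αp αv).map (↑) + ((A0 n αp αv).map (↑))ᴴ * P.map ((↑) : ℝ → ℂ)
      - P.map (↑) * (theta2 n).map (↑) * ((theta2 n).map (↑))ᴴ * P.map (↑) + 1 = 0 := by
    have h := congrArg (Matrix.map · ((↑) : ℝ → ℂ)) hRiccati
    simp only [Matrix.map_add _ Complex.ofReal_add, Matrix.map_sub _ Complex.ofReal_sub,
      map_ofReal_mul, map_ofReal_transpose, Matrix.map_one _ Complex.ofReal_zero Complex.ofReal_one,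
      Matrix.map_zero _ Complex.ofReal_zero] at h
    exact h
  have hKc : K.map ((↑) : ℝ → ℂ) = ((r⁻¹ : ℝ) : ℂ) • (((theta2 n).map (↑))ᴴ * P.map (↑)) := by
    rw [hK, Matrix.map_smulₛₗ _ Complex.ofReal r⁻¹ (Complex.ofReal_mul r⁻¹), map_ofReal_mul,
      map_ofReal_transpose]
  have hgain : 1 ≤ 2 * r⁻¹ * lam.re := by
    have : 1 ≤ r⁻¹ * lam.re := by rwa [← div_eq_inv_mul, one_le_div hr]
    linarith
  rw [hKc] at hμ
  exact re_lt_zero_of_isRoot_charpoly_riccati_closedLoop hPpos.map_ofReal hRic hgain hμ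

/-- per-eigenvalue Hurwitz conclusion from the proof of Theorem 2 of
the paper: if the real symmetric positive definite matrix `P` solves the algebraic
Riccati equation `P A0 + A0ᵀ P - P θ2 θ2ᵀ P + I = 0`, `r > 0` and `K = r⁻¹ θ2ᵀ P`,
then for every `λ ∈ ℂ` with `Re λ ≥ r`, every complex eigenvalue of `A0 - λ θ2 K`
has strictly negative real part. -/
theorem riccati_gain_is_Hurwitz
    (n : ℕ) (hn : 1 ≤ n) (αp αv : ℝ)
    (P : Matrix (Fin n ⊕ Fin n) (Fin n ⊕ Fin n) ℝ) (hPsymm : P.IsSymm) (hPpos : P.PosDef)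
    (hRiccati : P * A0 n αp αv + (A0 n αp αv)ᵀ * P
        - P * theta2 n * (theta2 n)ᵀ * P + 1 = 0)
    (r : ℝ) (hr : 0 < r)
    (K : Matrix (Fin n) (Fin n ⊕ Fin n) ℝ) (hK : K = r⁻¹ • ((theta2 n)ᵀ * P))
    (lam : ℂ) (hlam : r ≤ lam.re) :
    ∀ μ : ℂ,
      (((A0 n αp αv).map (Complex.ofReal ·)
        - lam • ((theta2 n).map (Complex.ofReal ·) * K.map (Complex.ofReal ·))).charpoly).IsRoot μ
      → μ.re < 0 :=
  riccati_gain_is_Hurwitz_general n αp αv P hPpos hRiccati r hr K hK lam hlam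

end
end

section
/- Let A be an m×m complex matrix and suppose C > 0 and γ > 0 are such that ‖exp(t A)‖ ≤ C e^{−γ t} for all t ≥ 0. Let b : ℝ → ℂ^m be continuous and suppose ‖b(t)‖ ≤ M for all t ≥ t_f, for some M ≥ 0 and t_f ≥ 0. Then every differentiable φ : ℝ → ℂ^m satisfying φ'(t) = A φ(t) + b(t) for all t ≥ 0 satisfies limsup_{t → ∞} ‖φ(t)‖ ≤ (C/γ) M. -/
open Matrix Polynomial Filter
open scoped Matrix.Norms.L2Operator

noncomputable section

/-- Multiplication of a vector in `EuclideanSpace ℂ (Fin m)` by an `m×m` complex matrix. -/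
def mulVecE {m : ℕ} (A : Matrix (Fin m) (Fin m) ℂ) (x : EuclideanSpace ℂ (Fin m)) :
    EuclideanSpace ℂ (Fin m) :=
  (WithLp.equiv 2 (Fin m → ℂ)).symm (A.mulVec ((WithLp.equiv 2 (Fin m → ℂ)) x))

/-! For `t ≥ t_f` the variation of constants formula gives
`φ t = exp ((t - t_f) A) (φ t_f) + ∫ u in t_f..t, exp ((t - u) A) (b u)`.
The first term decays like `C e^{-γ (t - t_f)}`, and the integral is at most
`C M ∫_0^∞ e^{-γ s} ds = C M / γ`. The semigroup is run over `ℝ`, after restricting the scalars of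
the complex operator, so that the product rule applies to `t ↦ exp (-t A) (φ t)`. -/

open NormedSpace Set Topology

theorem Filter.limsup_le_of_le_add_of_tendsto_zero {α : Type*} {l : Filter α} [l.NeBot]
    {f g : α → ℝ} {c : ℝ} (hf : IsCoboundedUnder (· ≤ ·) l f) (hg : Tendsto g l (𝓝 0))
    (hfg : ∀ᶠ x in l, f x ≤ g x + c) : limsup f l ≤ c := by
  have hgc : Tendsto (fun x => g x + c) l (𝓝 c) := by simpa using hg.add_const c
  exact (limsup_le_limsup hfg hf hgc.isBoundedUnder_le).trans hgc.limsup_eq.le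

theorem integral_exp_neg_mul_sub_le {γ : ℝ} (hγ : 0 < γ) (t₀ t : ℝ) :
    ∫ u in t₀..t, Real.exp (-γ * (t - u)) ≤ γ⁻¹ := by
  have hrw : ∀ u, -γ * (t - u) = γ * u - γ * t := fun u => by ring
  simp_rw [hrw]
  rw [intervalIntegral.integral_comp_mul_sub (fun x => Real.exp x) hγ.ne', integral_exp, sub_self,
    Real.exp_zero, smul_eq_mul]
  exact mul_le_of_le_one_right (inv_nonneg.2 hγ.le) (sub_le_self _ (Real.exp_pos _).le)

-- Lets the `_of_mem_ball` lemmas stand in for `exp_add_of_commute` and `map_exp`, which need a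
-- `NormedAlgebra ℚ` instance that a general `ℝ`-algebra does not provide.
theorem NormedSpace.mem_eball_expSeries_radius (𝕂 : Type*) {𝔸 : Type*} [NontriviallyNormedField 𝕂]
    [CharZero 𝕂] [ContinuousSMul ℚ 𝕂] [NormedRing 𝔸] [NormedAlgebra 𝕂 𝔸] (x : 𝔸) :
    x ∈ Metric.eball 0 (expSeries 𝕂 𝔸).radius :=
  (expSeries_radius_eq_top 𝕂 𝔸).symm ▸ edist_lt_top _ _

namespace ContinuousLinearMap

variable {E : Type*} [NormedAddCommGroup E] [NormedSpace ℂ E] [CompleteSpace E]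

def restrictScalarsRingHom : (E →L[ℂ] E) →+* (E →L[ℝ] E) where
  toFun f := f.restrictScalars ℝ
  map_one' := rfl
  map_mul' _ _ := rfl
  map_zero' := rfl
  map_add' _ _ := rfl

theorem exp_restrictScalars (f : E →L[ℂ] E) :
    exp (f.restrictScalars ℝ) = (exp f).restrictScalars ℝ :=
  (map_exp_of_mem_ball restrictScalarsRingHom (restrictScalarsIsometry ℂ E E ℝ ℝ).continuous f
    (mem_eball_expSeries_radius ℝ f)).symm

end ContinuousLinearMap

theorem exp_smul_mul_exp_smul {𝔸 : Type*} [NormedRing 𝔸] [NormedAlgebra ℝ 𝔸] [CompleteSpace 𝔸]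
    (x : 𝔸) (s t : ℝ) : exp (s • x) * exp (t • x) = exp ((s + t) • x) := by
  rw [add_smul, exp_add_of_commute_of_mem_ball (((Commute.refl x).smul_left s).smul_right t)
    (mem_eball_expSeries_radius ℝ _) (mem_eball_expSeries_radius ℝ _)]

theorem Matrix.norm_exp_smul_toEuclideanCLM_restrictScalars {m : ℕ} (A : Matrix (Fin m) (Fin m) ℂ)
    (t : ℝ) :
    ‖exp (t • (toEuclideanCLM (n := Fin m) (𝕜 := ℂ) A).restrictScalars ℝ)‖ = ‖exp (t • A)‖ := by
  have hcont : Continuous (toEuclideanCLM (n := Fin m) (𝕜 := ℂ)) :=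
    AddMonoidHomClass.continuous_of_bound _ 1 fun X => (one_mul ‖X‖).ge
  have hsmul : t • toEuclideanCLM (n := Fin m) (𝕜 := ℂ) A =
      toEuclideanCLM (n := Fin m) (𝕜 := ℂ) (t • A) := by
    rw [← Complex.coe_smul, map_smul]; rfl
  rw [← ContinuousLinearMap.restrictScalars_smul, ContinuousLinearMap.exp_restrictScalars,
    ContinuousLinearMap.norm_restrictScalars, hsmul,
    ← map_exp_of_mem_ball _ hcont _ (mem_eball_expSeries_radius ℂ _)]
  rfl

section LinearODE

variable {E : Type*} [NormedAddCommGroup E] [NormedSpace ℝ E] (L : E →L[ℝ] E)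

theorem norm_integral_exp_smul_apply_le {b : ℝ → E} {C γ M t₀ t : ℝ} (hγ : 0 < γ) (ht : t₀ ≤ t)
    (hexp : ∀ s, 0 ≤ s → ‖exp (s • L)‖ ≤ C * Real.exp (-γ * s))
    (hbM : ∀ u ∈ Icc t₀ t, ‖b u‖ ≤ M) :
    ‖∫ u in t₀..t, exp ((t - u) • L) (b u)‖ ≤ C / γ * M := by
  have hC : 0 ≤ C := by simpa using (norm_nonneg _).trans (hexp 0 le_rfl)
  have hM : 0 ≤ M := (norm_nonneg _).trans (hbM t₀ (left_mem_Icc.2 ht))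
  calc ‖∫ u in t₀..t, exp ((t - u) • L) (b u)‖
      ≤ ∫ u in t₀..t, C * M * Real.exp (-γ * (t - u)) := by
        have hcont : Continuous fun u => C * M * Real.exp (-γ * (t - u)) := by fun_prop
        refine intervalIntegral.norm_integral_le_of_norm_le ht (.of_forall fun u hu => ?_)
          (hcont.intervalIntegrable _ _)
        calc ‖exp ((t - u) • L) (b u)‖ ≤ ‖exp ((t - u) • L)‖ * ‖b u‖ :=
              ContinuousLinearMap.le_opNorm _ _
          _ ≤ C * Real.exp (-γ * (t - u)) * M := by
            gcongr
            · exact hexp _ (sub_nonneg.2 hu.2)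
            · exact hbM u (Ioc_subset_Icc_self hu)
          _ = C * M * Real.exp (-γ * (t - u)) := by ring
    _ = C * M * ∫ u in t₀..t, Real.exp (-γ * (t - u)) := intervalIntegral.integral_const_mul _ _
    _ ≤ C * M * γ⁻¹ := by gcongr; exact integral_exp_neg_mul_sub_le hγ t₀ t
    _ = C / γ * M := by ring

variable [CompleteSpace E]

theorem hasDerivAt_exp_neg_smul_apply {φ : ℝ → E} {φ' : E} {t : ℝ} (hφ : HasDerivAt φ φ' t) :
    HasDerivAt (fun u => exp ((-u) • L) (φ u)) (exp ((-t) • L) (φ' - L (φ t))) t := by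
  have hexp : HasDerivAt (fun u : ℝ => exp ((-u) • L)) (-(L * exp ((-t) • L))) t := by
    simpa only [Function.comp_def, neg_one_smul] using
      (hasDerivAt_exp_smul_const' L (-t)).scomp t (hasDerivAt_neg t)
  convert hexp.clm_apply hφ using 1
  rw [((Commute.refl L).smul_right (-t)).exp_right.eq]
  simp only [map_sub, _root_.neg_apply, mul_apply_eq_comp]
  abel

theorem eq_exp_smul_apply_add_integral {φ b : ℝ → E} {t₀ t : ℝ} (ht : t₀ ≤ t)
    (hb : ContinuousOn b (Icc t₀ t)) (hφ : ∀ s ∈ Icc t₀ t, HasDerivAt φ (L (φ s) + b s) s) :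
    φ t = exp ((t - t₀) • L) (φ t₀) + ∫ u in t₀..t, exp ((t - u) • L) (b u) := by
  have hψ : ∀ s ∈ uIcc t₀ t,
      HasDerivAt (fun u => exp ((-u) • L) (φ u)) (exp ((-s) • L) (b s)) s := by
    intro s hs
    rw [uIcc_of_le ht] at hs
    simpa using hasDerivAt_exp_neg_smul_apply L (hφ s hs)
  have hint : IntervalIntegrable (fun u => exp ((-u) • L) (b u)) MeasureTheory.volume t₀ t := by
    refine ContinuousOn.intervalIntegrable ?_
    rw [uIcc_of_le ht]
    have hexp : Continuous fun u : ℝ => exp ((-u) • L) :=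
      (differentiable_exp_smul_const ℝ L).continuous.comp continuous_neg
    exact hexp.continuousOn.clm_apply hb
  have hftc := intervalIntegral.integral_eq_sub_of_hasDerivAt hψ hint
  have hcomp : ∀ (s r : ℝ) (x : E), exp (s • L) (exp (r • L) x) = exp ((s + r) • L) x :=
    fun s r => DFunLike.congr_fun (exp_smul_mul_exp_smul L s r)
  have hconv : ∫ u in t₀..t, exp ((t - u) • L) (b u) =
      exp (t • L) (∫ u in t₀..t, exp ((-u) • L) (b u)) := by
    simp_rw [← (exp (t • L)).intervalIntegral_comp_comm hint, hcomp, ← sub_eq_add_neg]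
  rw [hconv, hftc, map_sub, hcomp, hcomp, add_neg_cancel, zero_smul, exp_zero, ← sub_eq_add_neg]
  rw [one_apply_eq_self, add_sub_cancel]

theorem norm_le_of_hasDerivAt_clm_apply_add {φ b : ℝ → E} {C γ M t₀ t : ℝ} (hγ : 0 < γ)
    (ht : t₀ ≤ t) (hexp : ∀ s, 0 ≤ s → ‖exp (s • L)‖ ≤ C * Real.exp (-γ * s))
    (hb : ContinuousOn b (Icc t₀ t)) (hbM : ∀ u ∈ Icc t₀ t, ‖b u‖ ≤ M)
    (hφ : ∀ s ∈ Icc t₀ t, HasDerivAt φ (L (φ s) + b s) s) :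
    ‖φ t‖ ≤ C * Real.exp (-γ * (t - t₀)) * ‖φ t₀‖ + C / γ * M := by
  rw [eq_exp_smul_apply_add_integral L ht hb hφ]
  refine (norm_add_le _ _).trans (add_le_add ?_ (norm_integral_exp_smul_apply_le L hγ ht hexp hbM))
  exact (ContinuousLinearMap.le_opNorm _ _).trans (by gcongr; exact hexp _ (sub_nonneg.2 ht))

theorem limsup_norm_le_of_hasDerivAt_clm_apply_add {φ b : ℝ → E} {C γ M t₀ : ℝ} (hγ : 0 < γ)
    (hexp : ∀ s, 0 ≤ s → ‖exp (s • L)‖ ≤ C * Real.exp (-γ * s))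
    (hb : ContinuousOn b (Ici t₀)) (hbM : ∀ t, t₀ ≤ t → ‖b t‖ ≤ M)
    (hφ : ∀ t, t₀ ≤ t → HasDerivAt φ (L (φ t) + b t) t) :
    limsup (fun t => ‖φ t‖) atTop ≤ C / γ * M := by
  have hdecay : Tendsto (fun t => C * Real.exp (-γ * (t - t₀)) * ‖φ t₀‖) atTop (𝓝 0) := by
    have h : Tendsto (fun t => -γ * (t - t₀)) atTop atBot :=
      (tendsto_atTop_add_const_right atTop (-t₀) tendsto_id).const_mul_atTop_of_neg (by linarith)
    simpa using ((Real.tendsto_exp_atBot.comp h).const_mul C).mul_const ‖φ t₀‖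
  refine limsup_le_of_le_add_of_tendsto_zero
    (isCoboundedUnder_le_of_le atTop fun t => norm_nonneg _) hdecay
    (eventually_atTop.2 ⟨t₀, fun t ht => ?_⟩)
  exact norm_le_of_hasDerivAt_clm_apply_add L hγ ht hexp (hb.mono Icc_subset_Ici_self)
    (fun u hu => hbM u hu.1) (fun s hs => hφ s hs.1)

end LinearODE

theorem hurwitz_asymptotic_gain_general
    (m : ℕ)
    (A : Matrix (Fin m) (Fin m) ℂ)
    (C γ : ℝ) (hγ : 0 < γ)
    (hexp : ∀ t : ℝ, 0 ≤ t → ‖NormedSpace.exp (t • A)‖ ≤ C * Real.exp (-γ * t))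
    (b : ℝ → EuclideanSpace ℂ (Fin m)) (hb : Continuous b)
    (M tf : ℝ) (htf : 0 ≤ tf)
    (hb_bdd : ∀ t : ℝ, tf ≤ t → ‖b t‖ ≤ M) :
    ∀ φ : ℝ → EuclideanSpace ℂ (Fin m), Differentiable ℝ φ →
      (∀ t : ℝ, 0 ≤ t → deriv φ t = mulVecE A (φ t) + b t) →
      limsup (fun t : ℝ => ‖φ t‖) atTop ≤ C / γ * M := by
  intro φ hφ hode
  refine limsup_norm_le_of_hasDerivAt_clm_apply_add
    ((toEuclideanCLM (n := Fin m) (𝕜 := ℂ) A).restrictScalars ℝ) hγ (fun t ht => ?_)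
    hb.continuousOn hb_bdd (fun t ht => ?_)
  · exact (norm_exp_smul_toEuclideanCLM_restrictScalars A t).le.trans (hexp t ht)
  · exact hode t (htf.trans ht) ▸ (hφ t).hasDerivAt

/-- asymptotic gain bound, corresponding to estimate (39) in the proof
of Theorem 2 of the paper: if `‖exp (t A)‖ ≤ C e^{-γ t}` for all `t ≥ 0` (operator
norm), `b` is continuous with `‖b t‖ ≤ M` for `t ≥ t_f`, then every differentiable `φ`
with `φ' t = A (φ t) + b t` for all `t ≥ 0` satisfies
`limsup_{t → ∞} ‖φ t‖ ≤ (C/γ) M`. -/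
theorem hurwitz_asymptotic_gain
    (m : ℕ) (hm : 1 ≤ m)
    (A : Matrix (Fin m) (Fin m) ℂ)
    (C γ : ℝ) (hC : 0 < C) (hγ : 0 < γ)
    (hexp : ∀ t : ℝ, 0 ≤ t → ‖NormedSpace.exp (t • A)‖ ≤ C * Real.exp (-γ * t))
    (b : ℝ → EuclideanSpace ℂ (Fin m)) (hb : Continuous b)
    (M tf : ℝ) (hM : 0 ≤ M) (htf : 0 ≤ tf)
    (hb_bdd : ∀ t : ℝ, tf ≤ t → ‖b t‖ ≤ M) :
    ∀ φ : ℝ → EuclideanSpace ℂ (Fin m), Differentiable ℝ φ →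
      (∀ t : ℝ, 0 ≤ t → deriv φ t = mulVecE A (φ t) + b t) →
      limsup (fun t : ℝ => ‖φ t‖) atTop ≤ C / γ * M :=
  hurwitz_asymptotic_gain_general m A C γ hγ hexp b hb M tf htf hb_bdd

end
end

section
/- Let σ > 0 and let e, d : ℝ → ℝ^n be differentiable functions satisfying e'(t) = d(t) − 2σ e(t) and d'(t) = −σ² e(t) for all t ≥ 0. Then e(t) → 0 and d(t) → 0 as t → ∞. -/
/-!
Put `u = d - σ e`. Then `u' = -σ u` and `e' = u - σ e`: the system is triangular with the
double eigenvalue `-σ`. Hence `u t = exp (-σ t) • u 0` and `e t = exp (-σ t) • (e 0 + t • u 0)`,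
both of which tend to `0`, and so does `d = u + σ e`.
-/

open Filter Real Topology

variable {E : Type*} [NormedAddCommGroup E] [NormedSpace ℝ E]

theorem eq_of_hasDerivAt_eq_zero_of_le {f : ℝ → E} {a : ℝ}
    (hf : ∀ t, a ≤ t → HasDerivAt f 0 t) {t : ℝ} (ht : a ≤ t) : f t = f a :=
  constant_of_has_deriv_right_zero
    (fun x hx => (hf x hx.1).continuousAt.continuousWithinAt)
    (fun x hx => (hf x hx.1).hasDerivWithinAt) t ⟨ht, le_rfl⟩

theorem eq_exp_neg_mul_smul_of_hasDerivAt {σ : ℝ} {c : E} {f : ℝ → E}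
    (hf : ∀ t, 0 ≤ t → HasDerivAt f (exp (-σ * t) • c - σ • f t) t) {t : ℝ} (ht : 0 ≤ t) :
    f t = exp (-σ * t) • (f 0 + t • c) := by
  -- the integrating factor `exp (σ s)` turns the equation into `(exp (σ s) • f s)' = c`
  have hconst : ∀ s, 0 ≤ s → HasDerivAt (fun s => exp (σ * s) • f s - s • c) 0 s := by
    intro s hs
    have hexp : HasDerivAt (fun s => exp (σ * s)) (exp (σ * s) * σ) s := by
      simpa using ((hasDerivAt_id s).const_mul σ).exp
    refine ((hexp.smul (hf s hs)).sub ((hasDerivAt_id s).smul_const c)).congr_deriv ?_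
    have hinv : exp (σ * s) * exp (-σ * s) = 1 := by rw [← exp_add]; ring_nf; exact exp_zero
    rw [smul_sub, smul_smul, smul_smul, hinv]
    module
  have key := eq_of_hasDerivAt_eq_zero_of_le hconst ht
  simp only [mul_zero, exp_zero, one_smul, zero_smul, sub_zero] at key
  rw [← key, sub_add_cancel, smul_smul, ← exp_add]
  simp

theorem tendsto_exp_neg_mul_smul_add_smul {σ : ℝ} (hσ : 0 < σ) (a c : E) :
    Tendsto (fun t : ℝ => exp (-σ * t) • (a + t • c)) atTop (𝓝 0) := by
  have hexp : Tendsto (fun t : ℝ => exp (-σ * t)) atTop (𝓝 0) :=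
    tendsto_exp_atBot.comp ((tendsto_const_nhds.neg_mul_atTop (neg_neg_of_pos hσ)) tendsto_id)
  have hmul : Tendsto (fun t : ℝ => t * exp (-σ * t)) atTop (𝓝 0) := by
    simpa using tendsto_rpow_mul_exp_neg_mul_atTop_nhds_zero 1 σ hσ
  convert (hexp.smul_const a).add (hmul.smul_const c) using 1
  · ext t
    rw [smul_add, smul_smul, mul_comm t]
  · simp

theorem eso_error_convergence_general
    (n : ℕ) (σ : ℝ) (hσ : 0 < σ)
    (e d : ℝ → (Fin n → ℝ))
    (he : ∀ t : ℝ, 0 ≤ t → HasDerivAt e (d t - (2 * σ) • e t) t)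
    (hd : ∀ t : ℝ, 0 ≤ t → HasDerivAt d (-((σ ^ 2) • e t)) t) :
    Tendsto e atTop (nhds 0) ∧ Tendsto d atTop (nhds 0) := by
  set u := fun t => d t - σ • e t with hu
  have hu_deriv : ∀ t, 0 ≤ t → HasDerivAt u (exp (-σ * t) • (0 : Fin n → ℝ) - σ • u t) t := by
    intro t ht
    refine ((hd t ht).sub ((he t ht).const_smul σ)).congr_deriv ?_
    rw [hu, smul_zero]
    module
  have hu_eq t (ht : 0 ≤ t) : u t = exp (-σ * t) • (u 0 + t • (0 : Fin n → ℝ)) :=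
    eq_exp_neg_mul_smul_of_hasDerivAt hu_deriv ht
  have he_eq t (ht : 0 ≤ t) : e t = exp (-σ * t) • (e 0 + t • u 0) := by
    refine eq_exp_neg_mul_smul_of_hasDerivAt (fun s hs => (he s hs).congr_deriv ?_) ht
    have hus := hu_eq s hs
    rw [smul_zero, add_zero] at hus
    rw [← hus, hu]
    module
  have he_lim : Tendsto e atTop (𝓝 0) :=
    (tendsto_exp_neg_mul_smul_add_smul hσ _ _).congr'
      (eventually_ge_atTop 0 |>.mono fun t ht => (he_eq t ht).symm)
  have hu_lim : Tendsto u atTop (𝓝 0) :=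
    (tendsto_exp_neg_mul_smul_add_smul hσ _ _).congr'
      (eventually_ge_atTop 0 |>.mono fun t ht => (hu_eq t ht).symm)
  refine ⟨he_lim, ?_⟩
  simpa [hu] using hu_lim.add (he_lim.const_smul σ)

/-- asymptotic disturbance compensation by the extended state
observer, for a constant disturbance: if `σ > 0` and `e' = d - 2σ e`, `d' = -σ² e`
for all `t ≥ 0`, then `e(t) → 0` and `d(t) → 0` as `t → ∞`. -/
theorem eso_error_convergence
    (n : ℕ) (hn : 1 ≤ n) (σ : ℝ) (hσ : 0 < σ)
    (e d : ℝ → (Fin n → ℝ))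
    (he : ∀ t : ℝ, 0 ≤ t → HasDerivAt e (d t - (2 * σ) • e t) t)
    (hd : ∀ t : ℝ, 0 ≤ t → HasDerivAt d (-((σ ^ 2) • e t)) t) :
    Tendsto e atTop (nhds 0) ∧ Tendsto d atTop (nhds 0) :=
  eso_error_convergence_general n σ hσ e d he hd
end

section
/- Let λ_2, ..., λ_N be complex numbers with 0 < Re(λ_2) ≤ Re(λ_k) for all k, let P be a 2n×2n real symmetric positive definite matrix satisfying the algebraic Riccati equation P A0 + A0ᵀ P − P θ2 θ2ᵀ P + I = 0, and set K = Re(λ_2)⁻¹ θ2ᵀ P. Let J̃ be any (N−1)×(N−1) upper triangular complex matrix with diagonal entries λ_2, ..., λ_N. Then every eigenvalue of the matrix I_{N−1} ⊗ A0 − J̃ ⊗ θ2 K has strictly negative real part. -/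
open Matrix intervalIntegral

noncomputable section

open Kronecker Polynomial

/-!
Since `J̃` is upper triangular, `I ⊗ A0 - J̃ ⊗ θ2 K` is block upper triangular, so its
eigenvalues are those of the blocks `A0 - λ_k θ2 K = A0 - g θ2 θ2ᵀ P` with `g = λ_k / Re λ_2`.
For such a block `D` the Riccati equation gives the Lyapunov identity
`P D + Dᴴ P = -I - (2 Re g - 1) P θ2 θ2ᵀ P`, and `Re g ≥ 1` makes the right-hand side negative
definite, which forces every eigenvalue of `D` into the open left half-plane. This is the
`[1/2, ∞)` gain margin of the LQR gain `θ2ᵀ P`.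
-/

open scoped ComplexOrder

namespace Matrix

theorem charpoly_one_kronecker_sub_kronecker {R ι m : Type*} [CommRing R] [Fintype ι]
    [LinearOrder ι] [Fintype m] [DecidableEq m]
    {J : Matrix ι ι R} (hJ : J.BlockTriangular id) (A B : Matrix m m R) :
    (1 ⊗ₖ A - J ⊗ₖ B).charpoly = ∏ k, (A - J k k • B).charpoly := by
  have htri : (1 ⊗ₖ A - J ⊗ₖ B).BlockTriangular Prod.fst := fun i j hij => by
    simp [kroneckerMap_apply, one_apply_ne hij.ne', hJ hij]
  have hblock (k : ι) :
      ((1 ⊗ₖ A - J ⊗ₖ B).toSquareBlock Prod.fst k).charpoly = (A - J k k • B).charpoly := by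
    let e : m ≃ {x : ι × m // x.1 = k} :=
      { toFun i := ⟨(k, i), rfl⟩
        invFun x := x.1.2
        right_inv x := Subtype.ext (Prod.ext x.2.symm rfl) }
    rw [← charpoly_reindex e.symm]
    congr 1
    ext i j
    simp [e, toSquareBlock_def, kroneckerMap_apply]
  rw [htri.charpoly, Finset.prod_congr rfl fun k _ => hblock k]
  rcases isEmpty_or_nonempty m with _ | _
  · simp
  · congr 1
    ext k
    simp

theorem conjTranspose_map_ofRealHom {m l : Type*} (M : Matrix m l ℝ) :
    (M.map Complex.ofRealHom)ᴴ = Mᵀ.map Complex.ofRealHom := by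
  rw [← conjTranspose_map _ fun x => by simp, conjTranspose_eq_transpose_of_trivial]

open scoped MatrixOrder in
theorem PosDef.map_ofRealHom {ι : Type*} [Fintype ι] [DecidableEq ι] {P : Matrix ι ι ℝ}
    (hP : P.PosDef) : (P.map Complex.ofRealHom).PosDef := by
  have hdet : (P.map Complex.ofRealHom).det ≠ 0 := by
    rw [← RingHom.mapMatrix_apply, ← RingHom.map_det]; simpa using hP.det_pos.ne'
  obtain ⟨B, rfl⟩ := CStarAlgebra.nonneg_iff_eq_star_mul_self.mp hP.posSemidef.nonneg
  have hsemi : ((star B * B).map Complex.ofRealHom).PosSemidef := by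
    rw [Matrix.map_mul, star_eq_conjTranspose, conjTranspose_eq_transpose_of_trivial,
      ← conjTranspose_map_ofRealHom]
    exact posSemidef_conjTranspose_mul_self _
  exact hsemi.posDef_iff_det_ne_zero.mpr hdet

variable {ι κ : Type*} [Fintype ι] [DecidableEq ι] [Fintype κ]

theorem re_lt_zero_of_lyapunov_s16 {D P : Matrix ι ι ℂ} (hP : P.PosDef)
    (hQ : (-(P * D + Dᴴ * P)).PosDef) {μ : ℂ} (hμ : D.charpoly.IsRoot μ) : μ.re < 0 := by
  obtain ⟨v, hv, hDv⟩ : ∃ v ≠ 0, (scalar ι μ - D) *ᵥ v = 0 :=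
    exists_mulVec_eq_zero_iff.mpr (by rw [← eval_charpoly]; exact hμ)
  replace hDv : D *ᵥ v = μ • v := by
    rw [sub_mulVec, scalar_apply, ← smul_one_eq_diagonal, smul_mulVec, one_mulVec] at hDv
    exact (sub_eq_zero.mp hDv).symm
  set q := star v ⬝ᵥ P *ᵥ v
  have hPD : star v ⬝ᵥ (P * D) *ᵥ v = μ * q := by
    rw [← mulVec_mulVec, hDv, mulVec_smul, dotProduct_smul, smul_eq_mul]
  have hDP : star v ⬝ᵥ (Dᴴ * P) *ᵥ v = star μ * q := by
    rw [← mulVec_mulVec, dotProduct_mulVec, ← star_mulVec, hDv, star_smul, smul_dotProduct,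
      smul_eq_mul]
  have hform : star v ⬝ᵥ (-(P * D + Dᴴ * P)) *ᵥ v = -((2 * μ.re : ℝ) * q) := by
    rw [neg_mulVec, add_mulVec, dotProduct_neg, dotProduct_add, hPD, hDP, ← add_mul,
      Complex.star_def, Complex.add_conj]
  have hQv := hQ.re_dotProduct_pos hv
  have hPv := hP.re_dotProduct_pos hv
  rw [hform] at hQv
  simp only [RCLike.re_to_complex, Complex.neg_re, Complex.re_ofReal_mul] at hQv hPv
  nlinarith

theorem posDef_neg_lyapunov_of_riccati {A P : Matrix ι ι ℂ} {Θ : Matrix ι κ ℂ}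
    (hP : P.IsHermitian) (hRic : P * A + Aᴴ * P - P * Θ * Θᴴ * P + 1 = 0) {g : ℂ}
    (hg : 1 ≤ 2 * g.re) :
    (-(P * (A - g • (Θ * Θᴴ * P)) + (A - g • (Θ * Θᴴ * P))ᴴ * P)).PosDef := by
  set G := Θᴴ * P
  have hS : P * Θ * Θᴴ * P = Gᴴ * G := by
    simp only [G, conjTranspose_mul, conjTranspose_conjTranspose, hP.eq, Matrix.mul_assoc]
  have hlyap : -(P * (A - g • (Θ * Θᴴ * P)) + (A - g • (Θ * Θᴴ * P))ᴴ * P)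
      = 1 + ((2 * g.re - 1 : ℝ) : ℂ) • (Gᴴ * G) := by
    rw [← hS]
    simp only [conjTranspose_sub, conjTranspose_smul, conjTranspose_mul, hP.eq,
      conjTranspose_conjTranspose, Matrix.mul_sub, Matrix.sub_mul, Matrix.mul_smul,
      Matrix.smul_mul, Matrix.mul_assoc] at hRic ⊢
    have hre : ((2 * g.re - 1 : ℝ) : ℂ) = g + star g - 1 := by
      rw [Complex.star_def, Complex.add_conj]; push_cast; ring
    rw [hre]
    linear_combination (norm := module) -hRic
  rw [hlyap]
  refine PosDef.one.add_posSemidef ((posSemidef_conjTranspose_mul_self G).smul ?_)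
  exact_mod_cast sub_nonneg.mpr hg

theorem re_lt_zero_of_riccati {A P : Matrix ι ι ℂ} {Θ : Matrix ι κ ℂ} (hP : P.PosDef)
    (hRic : P * A + Aᴴ * P - P * Θ * Θᴴ * P + 1 = 0) {g : ℂ} (hg : 1 ≤ 2 * g.re) {μ : ℂ}
    (hμ : (A - g • (Θ * Θᴴ * P)).charpoly.IsRoot μ) : μ.re < 0 :=
  re_lt_zero_of_lyapunov_s16 hP (posDef_neg_lyapunov_of_riccati hP.isHermitian hRic hg) hμ

end Matrix

/-- stability core of Theorem 2 of the paper: let `λ_2, ..., λ_N` be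
complex numbers with `0 < Re λ_2 ≤ Re λ_k`, let the real symmetric positive definite
`P` solve the Riccati equation `P A0 + A0ᵀ P - P θ2 θ2ᵀ P + I = 0`, and set
`K = (Re λ_2)⁻¹ θ2ᵀ P`.  Then for any upper triangular `J̃` with diagonal entries
`λ_2, ..., λ_N`, every eigenvalue of `I_{N-1} ⊗ A0 - J̃ ⊗ θ2 K` has strictly negative
real part. -/
theorem disagreement_dynamics_hurwitz
    (n N : ℕ) (hN : 2 ≤ N) (αp αv : ℝ)
    (lam : Fin (N - 1) → ℂ)
    (hre_pos : 0 < (lam ⟨0, by omega⟩).re)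
    (hre_min : ∀ k, (lam ⟨0, by omega⟩).re ≤ (lam k).re)
    (P : Matrix (Fin n ⊕ Fin n) (Fin n ⊕ Fin n) ℝ) (hPpos : P.PosDef)
    (hRiccati : P * A0 n αp αv + (A0 n αp αv)ᵀ * P
        - P * theta2 n * (theta2 n)ᵀ * P + 1 = 0)
    (K : Matrix (Fin n) (Fin n ⊕ Fin n) ℝ)
    (hK : K = ((lam ⟨0, by omega⟩).re)⁻¹ • ((theta2 n)ᵀ * P))
    (J : Matrix (Fin (N - 1)) (Fin (N - 1)) ℂ)
    (hJtri : J.BlockTriangular (id : Fin (N - 1) → Fin (N - 1)))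
    (hJdiag : ∀ k, J k k = lam k) :
    ∀ μ : ℂ,
      ((((1 : Matrix (Fin (N - 1)) (Fin (N - 1)) ℂ)
            ⊗ₖ ((A0 n αp αv).map (Complex.ofReal ·))
          - J ⊗ₖ ((theta2 n * K).map (Complex.ofReal ·))).charpoly).IsRoot μ)
      → μ.re < 0 := by
  intro μ hμ
  set a := (lam ⟨0, by omega⟩).re
  set Ac := (A0 n αp αv).map Complex.ofRealHom
  set Pc := P.map Complex.ofRealHom
  set Θ := (theta2 n).map Complex.ofRealHom
  have hRic : Pc * Ac + Acᴴ * Pc - Pc * Θ * Θᴴ * Pc + 1 = 0 := by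
    have := congrArg Complex.ofRealHom.mapMatrix hRiccati
    simp only [map_add, map_sub, map_mul, map_one, map_zero] at this
    simpa only [Ac, Θ, conjTranspose_map_ofRealHom, RingHom.mapMatrix_apply, Matrix.map_mul]
      using this
  have hgain : (theta2 n * K).map Complex.ofRealHom = ((a⁻¹ : ℝ) : ℂ) • (Θ * Θᴴ * Pc) := by
    rw [hK, Matrix.mul_smul, ← Matrix.mul_assoc, Matrix.map_smul' _ _ _ (map_mul _),
      Matrix.map_mul, Matrix.map_mul, conjTranspose_map_ofRealHom]
    rfl
  -- turn the coercion maps of the statement into maps along the ring hom `Complex.ofRealHom`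
  simp only [← Complex.ofRealHom_eq_coe] at hμ
  rw [charpoly_one_kronecker_sub_kronecker hJtri, Polynomial.isRoot_prod] at hμ
  obtain ⟨k, -, hk⟩ := hμ
  rw [hgain, hJdiag, smul_smul] at hk
  refine re_lt_zero_of_riccati hPpos.map_ofRealHom hRic ?_ hk
  have := (one_le_div hre_pos).mpr (hre_min k)
  rw [Complex.re_mul_ofReal, ← div_eq_mul_inv]
  linarith
end
end
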